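/- Monotonicity of redundant information: for a probability mass function p on 𝒳 × 𝒴 × 𝒲 × 𝒵, I_red(Z;X,Y) ≤ I_red(Z;X,(Y,W)), where on the right (Y,W) is treated as a single variable. -/

import Mathlib

open scoped BigOperators

/-- `p` is a probability mass function on a finite type. -/
def IsPMF {α : Type*} [Fintype α] (p : α → ℝ) : Prop :=
  (∀ a, 0 ≤ p a) ∧ ∑ a, p a = 1

/-- Kullback–Leibler divergence `D(u‖v) = Σ u log (u/v)` (with the convention `0 log 0 = 0`),
`⊤` if absolute continuity fails, i.e. if `u a > 0 = v a` for some `a`. -/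
noncomputable def klDiv {α : Type*} [Fintype α] (u v : α → ℝ) : EReal :=
  if ∀ a, 0 < u a → 0 < v a then ((∑ a, u a * Real.log (u a / v a) : ℝ) : EReal) else ⊤

variable {𝓧 𝓨 𝓦 𝓩 : Type*} [Fintype 𝓧] [Fintype 𝓨] [Fintype 𝓦] [Fintype 𝓩]

/-- Marginal `p(x)`. -/
noncomputable def margX (p : 𝓧 × 𝓨 × 𝓦 × 𝓩 → ℝ) (x : 𝓧) : ℝ :=
  ∑ y, ∑ w, ∑ z, p (x, y, w, z)

/-- Marginal `p(y)`. -/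
noncomputable def margY (p : 𝓧 × 𝓨 × 𝓦 × 𝓩 → ℝ) (y : 𝓨) : ℝ :=
  ∑ x, ∑ w, ∑ z, p (x, y, w, z)

/-- Marginal `p(y,w)` of the joint variable `(Y,W)`. -/
noncomputable def margYW (p : 𝓧 × 𝓨 × 𝓦 × 𝓩 → ℝ) (y : 𝓨) (w : 𝓦) : ℝ :=
  ∑ x, ∑ z, p (x, y, w, z)

/-- Marginal `p(z)`. -/
noncomputable def margZ (p : 𝓧 × 𝓨 × 𝓦 × 𝓩 → ℝ) (z : 𝓩) : ℝ :=
  ∑ x, ∑ y, ∑ w, p (x, y, w, z)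

/-- Joint marginal `p(x,z)`. -/
noncomputable def margXZ (p : 𝓧 × 𝓨 × 𝓦 × 𝓩 → ℝ) (x : 𝓧) (z : 𝓩) : ℝ :=
  ∑ y, ∑ w, p (x, y, w, z)

/-- Joint marginal `p(y,z)`. -/
noncomputable def margYZ (p : 𝓧 × 𝓨 × 𝓦 × 𝓩 → ℝ) (y : 𝓨) (z : 𝓩) : ℝ :=
  ∑ x, ∑ w, p (x, y, w, z)

/-- Joint marginal `p(y,w,z)`. -/
noncomputable def margYWZ (p : 𝓧 × 𝓨 × 𝓦 × 𝓩 → ℝ) (y : 𝓨) (w : 𝓦) (z : 𝓩) : ℝ :=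
  ∑ x, p (x, y, w, z)

/-- Conditional distribution `p(·|x)` of `Z` given `X = x`. -/
noncomputable def condX (p : 𝓧 × 𝓨 × 𝓦 × 𝓩 → ℝ) (x : 𝓧) : 𝓩 → ℝ :=
  fun z => margXZ p x z / margX p x

/-- Conditional distribution `p(·|y)` of `Z` given `Y = y`. -/
noncomputable def condY (p : 𝓧 × 𝓨 × 𝓦 × 𝓩 → ℝ) (y : 𝓨) : 𝓩 → ℝ :=
  fun z => margYZ p y z / margY p y

/-- Conditional distribution `p(·|y,w)` of `Z` given `(Y,W) = (y,w)`. -/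
noncomputable def condYW (p : 𝓧 × 𝓨 × 𝓦 × 𝓩 → ℝ) (y : 𝓨) (w : 𝓦) : 𝓩 → ℝ :=
  fun z => margYWZ p y w z / margYW p y w

/-- `C_X`: convex hull of `{p(·|x) : p(x) > 0}`. -/
noncomputable def CXhull (p : 𝓧 × 𝓨 × 𝓦 × 𝓩 → ℝ) : Set (𝓩 → ℝ) :=
  convexHull ℝ {q | ∃ x, 0 < margX p x ∧ q = condX p x}

/-- `C_Y`: convex hull of `{p(·|y) : p(y) > 0}`. -/
noncomputable def CYhull (p : 𝓧 × 𝓨 × 𝓦 × 𝓩 → ℝ) : Set (𝓩 → ℝ) :=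
  convexHull ℝ {q | ∃ y, 0 < margY p y ∧ q = condY p y}

/-- `C_{(Y,W)}`: convex hull of `{p(·|y,w) : p(y,w) > 0}`. -/
noncomputable def CYWhull (p : 𝓧 × 𝓨 × 𝓦 × 𝓩 → ℝ) : Set (𝓩 → ℝ) :=
  convexHull ℝ {q | ∃ y w, 0 < margYW p y w ∧ q = condYW p y w}

/-- Projected information `I_pr(X ↘ Y; Z)`. -/
noncomputable def IprXY (p : 𝓧 × 𝓨 × 𝓦 × 𝓩 → ℝ) : ℝ :=
  ∑ x, if 0 < margX p x then
      margX p x * ((klDiv (condX p x) (margZ p)).toReal -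
        (⨅ q ∈ CYhull p, klDiv (condX p x) q).toReal)
    else 0

/-- Projected information `I_pr(X ↘ (Y,W); Z)`. -/
noncomputable def IprXYW (p : 𝓧 × 𝓨 × 𝓦 × 𝓩 → ℝ) : ℝ :=
  ∑ x, if 0 < margX p x then
      margX p x * ((klDiv (condX p x) (margZ p)).toReal -
        (⨅ q ∈ CYWhull p, klDiv (condX p x) q).toReal)
    else 0

/-- Projected information `I_pr(Y ↘ X; Z)`. -/
noncomputable def IprYX (p : 𝓧 × 𝓨 × 𝓦 × 𝓩 → ℝ) : ℝ :=
  ∑ y, if 0 < margY p y then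
      margY p y * ((klDiv (condY p y) (margZ p)).toReal -
        (⨅ q ∈ CXhull p, klDiv (condY p y) q).toReal)
    else 0

/-- Projected information `I_pr((Y,W) ↘ X; Z)`, treating `(Y,W)` as a single variable. -/
noncomputable def IprYWX (p : 𝓧 × 𝓨 × 𝓦 × 𝓩 → ℝ) : ℝ :=
  ∑ y, ∑ w, if 0 < margYW p y w then
      margYW p y w * ((klDiv (condYW p y w) (margZ p)).toReal -
        (⨅ q ∈ CXhull p, klDiv (condYW p y w) q).toReal)
    else 0

/-- Redundant information `I_red(Z;X,Y)`. -/
noncomputable def IredXY (p : 𝓧 × 𝓨 × 𝓦 × 𝓩 → ℝ) : ℝ := min (IprXY p) (IprYX p)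

/-- Redundant information `I_red(Z;X,(Y,W))`, treating `(Y,W)` as a single variable. -/
noncomputable def IredXYW (p : 𝓧 × 𝓨 × 𝓦 × 𝓩 → ℝ) : ℝ := min (IprXYW p) (IprYWX p)

/-!
Passing from `Y` to `(Y,W)` enlarges `C_Y` to `C_{(Y,W)}`, because `p(·|y)` is the
`p(w|y)`-mixture of the `p(·|y,w)`; so the infimum in `I_pr(X↘Y;Z)` can only decrease.
For `I_pr(Y↘X;Z)`, note that `D(u‖p_Z) − D(u‖q) = Σ_z u(z) log (q(z)/p_Z(z))` is linear in `u`.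
Hence `u ↦ D(u‖p_Z) − inf_{q ∈ C_X} D(u‖q)` is a supremum of linear functions, thus convex, and
splitting each `p(·|y)` into the mixture of the `p(·|y,w)` can only increase the average.
-/

open Finset

section KullbackLeibler

variable {α : Type*} [Fintype α]

lemma klDiv_ne_top_iff {u v : α → ℝ} : klDiv u v ≠ ⊤ ↔ ∀ a, 0 < u a → 0 < v a := by
  unfold klDiv
  split_ifs with h <;> simpa using h

lemma klDiv_of_pos_imp_pos {u v : α → ℝ} (h : ∀ a, 0 < u a → 0 < v a) :
    klDiv u v = ((∑ a, u a * Real.log (u a / v a) : ℝ) : EReal) :=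
  if_pos h

lemma klDiv_of_not_pos_imp_pos {u v : α → ℝ} (h : ¬∀ a, 0 < u a → 0 < v a) : klDiv u v = ⊤ :=
  if_neg h

lemma sub_le_mul_log_div {a b : ℝ} (ha : 0 ≤ a) (hb : 0 ≤ b) (hab : 0 < a → 0 < b) :
    a - b ≤ a * Real.log (a / b) := by
  rcases ha.eq_or_lt with rfl | ha
  · simpa using hb
  · have hb := hab ha
    have h := Real.one_sub_inv_le_log_of_pos (div_pos ha hb)
    rw [inv_div] at h
    calc a - b = a * (1 - b / a) := by field_simp
      _ ≤ a * Real.log (a / b) := mul_le_mul_of_nonneg_left h ha.le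

lemma klDiv_nonneg {u v : α → ℝ} (hu : u ∈ stdSimplex ℝ α) (hv : v ∈ stdSimplex ℝ α) :
    0 ≤ klDiv u v := by
  by_cases huv : ∀ a, 0 < u a → 0 < v a
  · rw [klDiv_of_pos_imp_pos huv, EReal.coe_nonneg]
    calc (0 : ℝ) = ∑ a, (u a - v a) := by rw [sum_sub_distrib, hu.2, hv.2, sub_self]
      _ ≤ _ := sum_le_sum fun a _ => sub_le_mul_log_div (hu.1 a) (hv.1 a) (huv a)
  · rw [klDiv_of_not_pos_imp_pos huv]
    exact le_top

lemma toReal_klDiv_sub_toReal_klDiv {u q r : α → ℝ} (hu : ∀ a, 0 ≤ u a)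
    (huq : ∀ a, 0 < u a → 0 < q a) (hur : ∀ a, 0 < u a → 0 < r a) :
    (klDiv u r).toReal - (klDiv u q).toReal = ∑ a, u a * Real.log (q a / r a) := by
  rw [klDiv_of_pos_imp_pos hur, klDiv_of_pos_imp_pos huq, EReal.toReal_coe, EReal.toReal_coe,
    ← sum_sub_distrib]
  refine sum_congr rfl fun a _ => ?_
  rcases (hu a).eq_or_lt with h | h
  · simp [← h]
  · rw [← mul_sub, Real.log_div h.ne' (hur a h).ne', Real.log_div h.ne' (huq a h).ne',
      Real.log_div (huq a h).ne' (hur a h).ne']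
    ring

/-- `I_pr(X↘Y;Z)` is the `p(x)`-average of `klProjGain (p(·|x)) p_Z C_Y`. -/
noncomputable def klProjGain (u r : α → ℝ) (C : Set (α → ℝ)) : ℝ :=
  (klDiv u r).toReal - (⨅ q ∈ C, klDiv u q).toReal

variable {u r : α → ℝ} {C : Set (α → ℝ)}

lemma klProjGain_mono {C' : Set (α → ℝ)} (hu : u ∈ stdSimplex ℝ α) (hC' : C' ⊆ stdSimplex ℝ α)
    (hCC' : C ⊆ C') {q : α → ℝ} (hq : q ∈ C) (huq : ∀ a, 0 < u a → 0 < q a) :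
    klProjGain u r C ≤ klProjGain u r C' := by
  have hbot : ⨅ q ∈ C', klDiv u q ≠ ⊥ :=
    ne_bot_of_le_ne_bot EReal.zero_ne_bot <| le_iInf₂ fun q hq => klDiv_nonneg hu (hC' hq)
  have htop : ⨅ q ∈ C, klDiv u q ≠ ⊤ :=
    ne_top_of_le_ne_top (klDiv_ne_top_iff.2 huq) (iInf₂_le q hq)
  have := EReal.toReal_le_toReal (iInf_le_iInf_of_subset hCC') hbot htop
  unfold klProjGain
  linarith

lemma sum_mul_log_div_le_klProjGain (hu : u ∈ stdSimplex ℝ α) (hC : C ⊆ stdSimplex ℝ α)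
    {q : α → ℝ} (hq : q ∈ C) (huq : ∀ a, 0 < u a → 0 < q a) (hur : ∀ a, 0 < u a → 0 < r a) :
    ∑ a, u a * Real.log (q a / r a) ≤ klProjGain u r C := by
  have hbot : ⨅ q ∈ C, klDiv u q ≠ ⊥ :=
    ne_bot_of_le_ne_bot EReal.zero_ne_bot <| le_iInf₂ fun q hq => klDiv_nonneg hu (hC hq)
  have := EReal.toReal_le_toReal (iInf₂_le q hq) hbot (klDiv_ne_top_iff.2 huq)
  rw [← toReal_klDiv_sub_toReal_klDiv hu.1 huq hur]
  unfold klProjGain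
  linarith

lemma klProjGain_le_of_forall_sum_mul_log_div_le {B : ℝ} (hu : ∀ a, 0 ≤ u a) (hrC : r ∈ C)
    (hur : ∀ a, 0 < u a → 0 < r a)
    (h : ∀ q ∈ C, (∀ a, 0 < u a → 0 < q a) → ∑ a, u a * Real.log (q a / r a) ≤ B) :
    klProjGain u r C ≤ B := by
  have hle : (((klDiv u r).toReal - B : ℝ) : EReal) ≤ ⨅ q ∈ C, klDiv u q := by
    refine le_iInf₂ fun q hq => ?_
    by_cases huq : ∀ a, 0 < u a → 0 < q a
    · have := toReal_klDiv_sub_toReal_klDiv hu huq hur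
      rw [klDiv_of_pos_imp_pos huq, EReal.coe_le_coe_iff]
      rw [klDiv_of_pos_imp_pos huq, EReal.toReal_coe] at this
      linarith [h q hq huq]
    · rw [klDiv_of_not_pos_imp_pos huq]
      exact le_top
  have htop : ⨅ q ∈ C, klDiv u q ≠ ⊤ :=
    ne_top_of_le_ne_top (klDiv_ne_top_iff.2 hur) (iInf₂_le r hrC)
  have := EReal.toReal_le_toReal hle (EReal.coe_ne_bot _) htop
  rw [EReal.toReal_coe] at this
  unfold klProjGain
  linarith

lemma klProjGain_le_sum_mul {ι : Type*} [Fintype ι] {c : ι → ℝ} {v : ι → α → ℝ}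
    (hc : ∀ i, 0 ≤ c i) (hv : ∀ i, 0 < c i → v i ∈ stdSimplex ℝ α) (huv : u = ∑ i, c i • v i)
    (hC : C ⊆ stdSimplex ℝ α) (hrC : r ∈ C) (hur : ∀ a, 0 < u a → 0 < r a) :
    klProjGain u r C ≤ ∑ i, c i * klProjGain (v i) r C := by
  have hcv : ∀ i a, 0 ≤ c i * v i a := fun i a => by
    rcases (hc i).eq_or_lt with h | h
    · simp [← h]
    · exact mul_nonneg h.le ((hv i h).1 a)
  have hu : ∀ a, u a = ∑ i, c i * v i a := fun a => by simp [huv, Finset.sum_apply]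
  have hu₀ : ∀ a, 0 ≤ u a := fun a => by
    rw [hu a]
    exact sum_nonneg fun i _ => hcv i a
  have hvu : ∀ i, 0 < c i → ∀ a, 0 < v i a → 0 < u a := fun i hi a ha => by
    rw [hu a]
    exact (mul_pos hi ha).trans_le (single_le_sum (fun j _ => hcv j a) (mem_univ i))
  refine klProjGain_le_of_forall_sum_mul_log_div_le hu₀ hrC hur fun q hq huq => ?_
  calc ∑ a, u a * Real.log (q a / r a)
      = ∑ i, c i * ∑ a, v i a * Real.log (q a / r a) := by
        simp_rw [hu, sum_mul, mul_sum, mul_assoc]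
        exact sum_comm
    _ ≤ ∑ i, c i * klProjGain (v i) r C := by
        refine sum_le_sum fun i _ => ?_
        rcases (hc i).eq_or_lt with h | h
        · simp [← h]
        · exact mul_le_mul_of_nonneg_left (sum_mul_log_div_le_klProjGain (hv i h) hC hq
            (fun a ha => huq a (hvu i h a ha)) (fun a ha => hur a (hvu i h a ha))) h.le

end KullbackLeibler

lemma sum_smul_mem_convexHull {ι E : Type*} [Fintype ι] [AddCommGroup E] [Module ℝ E]
    {s : Set E} {w : ι → ℝ} {z : ι → E} (h₀ : ∀ i, 0 ≤ w i) (h₁ : ∑ i, w i = 1)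
    (hz : ∀ i, w i ≠ 0 → z i ∈ s) : ∑ i, w i • z i ∈ convexHull ℝ s := by
  rw [← finsum_eq_sum_of_fintype]
  exact (convex_convexHull ℝ s).finsum_mem h₀ (by rwa [finsum_eq_sum_of_fintype])
    fun i hi => subset_convexHull ℝ s (hz i hi)

section Conditional

variable {β α : Type*} [Fintype β] {J : β → α → ℝ} {m : β → ℝ}

lemma div_mem_stdSimplex [Fintype α] {v : α → ℝ} {s : ℝ} (hv : ∀ a, 0 ≤ v a) (hs : s = ∑ a, v a)
    (hs₀ : 0 < s) : (fun a => v a / s) ∈ stdSimplex ℝ α :=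
  ⟨fun a => div_nonneg (hv a) hs₀.le, by rw [← sum_div, ← hs, div_self hs₀.ne']⟩

lemma sum_div_smul_div [Fintype α] (hJ : ∀ b a, 0 ≤ J b a) (hm : ∀ b, m b = ∑ a, J b a) (M : ℝ) :
    ∑ b, (m b / M) • (fun a => J b a / m b) = fun a => (∑ b, J b a) / M := by
  funext a
  simp only [Finset.sum_apply, Pi.smul_apply, smul_eq_mul, sum_div]
  refine sum_congr rfl fun b _ => ?_
  have hJm : m b = 0 → J b a = 0 := fun h =>
    ((sum_eq_zero_iff_of_nonneg fun a _ => hJ b a).1 ((hm b).symm.trans h)) a (mem_univ a)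
  rw [div_mul_eq_mul_div, mul_div_cancel_of_imp' hJm]

lemma sum_pos_of_div_pos (hJ : ∀ b a, 0 ≤ J b a) {b : β} {a : α} (h : 0 < J b a / m b) :
    0 < ∑ b', J b' a := by
  have hJ₀ : 0 < J b a := (hJ b a).lt_of_ne fun h0 => by simp [← h0] at h
  exact hJ₀.trans_le (single_le_sum (fun b' _ => hJ b' a) (mem_univ b))

end Conditional

section Marginals

variable (p : 𝓧 × 𝓨 × 𝓦 × 𝓩 → ℝ)

omit [Fintype 𝓧] in
lemma margX_eq_sum_margXZ (x : 𝓧) : margX p x = ∑ z, margXZ p x z :=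
  (sum_congr rfl fun _ _ => sum_comm).trans sum_comm

omit [Fintype 𝓨] in
lemma margY_eq_sum_margYZ (y : 𝓨) : margY p y = ∑ z, margYZ p y z :=
  (sum_congr rfl fun _ _ => sum_comm).trans sum_comm

omit [Fintype 𝓨] [Fintype 𝓦] in
lemma margYW_eq_sum_margYWZ (y : 𝓨) (w : 𝓦) : margYW p y w = ∑ z, margYWZ p y w z :=
  sum_comm

omit [Fintype 𝓨] in
lemma margY_eq_sum_margYW (y : 𝓨) : margY p y = ∑ w, margYW p y w :=
  sum_comm

omit [Fintype 𝓨] [Fintype 𝓩] in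
lemma margYZ_eq_sum_margYWZ (y : 𝓨) (z : 𝓩) : margYZ p y z = ∑ w, margYWZ p y w z :=
  sum_comm

omit [Fintype 𝓩] in
lemma margZ_eq_sum_margYZ (z : 𝓩) : margZ p z = ∑ y, margYZ p y z :=
  sum_comm

lemma sum_margX : ∑ x, margX p x = ∑ a, p a := by
  simp only [margX, Fintype.sum_prod_type]

lemma sum_margY : ∑ y, margY p y = ∑ a, p a := by
  rw [← sum_margX]
  exact sum_comm

variable {p} (hp : IsPMF p)
include hp

lemma margXZ_nonneg (x : 𝓧) (z : 𝓩) : 0 ≤ margXZ p x z :=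
  sum_nonneg fun _ _ => sum_nonneg fun _ _ => hp.1 _

lemma margYZ_nonneg (y : 𝓨) (z : 𝓩) : 0 ≤ margYZ p y z :=
  sum_nonneg fun _ _ => sum_nonneg fun _ _ => hp.1 _

lemma margYWZ_nonneg (y : 𝓨) (w : 𝓦) (z : 𝓩) : 0 ≤ margYWZ p y w z :=
  sum_nonneg fun _ _ => hp.1 _

lemma margX_nonneg (x : 𝓧) : 0 ≤ margX p x :=
  sum_nonneg fun _ _ => sum_nonneg fun _ _ => sum_nonneg fun _ _ => hp.1 _

lemma margY_nonneg (y : 𝓨) : 0 ≤ margY p y :=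
  sum_nonneg fun _ _ => sum_nonneg fun _ _ => sum_nonneg fun _ _ => hp.1 _

lemma margYW_nonneg (y : 𝓨) (w : 𝓦) : 0 ≤ margYW p y w :=
  sum_nonneg fun _ _ => sum_nonneg fun _ _ => hp.1 _

lemma margYW_le_margY (y : 𝓨) (w : 𝓦) : margYW p y w ≤ margY p y := by
  rw [margY_eq_sum_margYW]
  exact single_le_sum (fun w _ => margYW_nonneg hp y w) (mem_univ w)

lemma condX_mem_stdSimplex {x : 𝓧} (hx : 0 < margX p x) : condX p x ∈ stdSimplex ℝ 𝓩 :=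
  div_mem_stdSimplex (margXZ_nonneg hp x) (margX_eq_sum_margXZ p x) hx

lemma condYW_mem_stdSimplex {y : 𝓨} {w : 𝓦} (hyw : 0 < margYW p y w) :
    condYW p y w ∈ stdSimplex ℝ 𝓩 :=
  div_mem_stdSimplex (margYWZ_nonneg hp y w) (margYW_eq_sum_margYWZ p y w) hyw

lemma CXhull_subset_stdSimplex : CXhull p ⊆ stdSimplex ℝ 𝓩 :=
  convexHull_min (by rintro _ ⟨x, hx, rfl⟩; exact condX_mem_stdSimplex hp hx)
    (convex_stdSimplex ℝ 𝓩)

lemma CYWhull_subset_stdSimplex : CYWhull p ⊆ stdSimplex ℝ 𝓩 :=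
  convexHull_min (by rintro _ ⟨y, w, hyw, rfl⟩; exact condYW_mem_stdSimplex hp hyw)
    (convex_stdSimplex ℝ 𝓩)

lemma pos_margZ_of_pos_condX {x : 𝓧} {z : 𝓩} (h : 0 < condX p x z) : 0 < margZ p z :=
  sum_pos_of_div_pos (margXZ_nonneg hp) h

lemma pos_margZ_of_pos_condY {y : 𝓨} {z : 𝓩} (h : 0 < condY p y z) : 0 < margZ p z := by
  rw [margZ_eq_sum_margYZ]
  exact sum_pos_of_div_pos (margYZ_nonneg hp) h

lemma margZ_eq_sum_smul_condX : margZ p = ∑ x, margX p x • condX p x := by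
  have := sum_div_smul_div (margXZ_nonneg hp) (margX_eq_sum_margXZ p) 1
  simp only [div_one] at this
  exact this.symm

lemma margZ_eq_sum_smul_condY : margZ p = ∑ y, margY p y • condY p y := by
  have := sum_div_smul_div (margYZ_nonneg hp) (margY_eq_sum_margYZ p) 1
  simp only [div_one, ← margZ_eq_sum_margYZ] at this
  exact this.symm

lemma condY_eq_sum_smul_condYW (y : 𝓨) :
    condY p y = ∑ w, (margYW p y w / margY p y) • condYW p y w := by
  have := sum_div_smul_div (margYWZ_nonneg hp y) (margYW_eq_sum_margYWZ p y) (margY p y)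
  simp only [← margYZ_eq_sum_margYWZ] at this
  exact this.symm

lemma margZ_mem_CXhull : margZ p ∈ CXhull p := by
  rw [margZ_eq_sum_smul_condX hp]
  exact sum_smul_mem_convexHull (margX_nonneg hp) ((sum_margX p).trans hp.2)
    fun x hx => ⟨x, (margX_nonneg hp x).lt_of_ne' hx, rfl⟩

lemma margZ_mem_CYhull : margZ p ∈ CYhull p := by
  rw [margZ_eq_sum_smul_condY hp]
  exact sum_smul_mem_convexHull (margY_nonneg hp) ((sum_margY p).trans hp.2)
    fun y hy => ⟨y, (margY_nonneg hp y).lt_of_ne' hy, rfl⟩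

lemma CYhull_subset_CYWhull : CYhull p ⊆ CYWhull p := by
  refine convexHull_min ?_ (convex_convexHull ℝ _)
  rintro _ ⟨y, hy, rfl⟩
  rw [condY_eq_sum_smul_condYW hp]
  refine sum_smul_mem_convexHull (fun w => div_nonneg (margYW_nonneg hp y w) hy.le) ?_ ?_
  · rw [← sum_div, ← margY_eq_sum_margYW, div_self hy.ne']
  · intro w hw
    exact ⟨y, w, (margYW_nonneg hp y w).lt_of_ne' (div_ne_zero_iff.1 hw).1, rfl⟩

end Marginals

section ProjectedInformation

variable {p : 𝓧 × 𝓨 × 𝓦 × 𝓩 → ℝ} (hp : IsPMF p)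
include hp

lemma IprXY_le_IprXYW : IprXY p ≤ IprXYW p := by
  refine sum_le_sum fun x _ => ?_
  split_ifs with hx
  · exact mul_le_mul_of_nonneg_left (klProjGain_mono (condX_mem_stdSimplex hp hx)
      (CYWhull_subset_stdSimplex hp) (CYhull_subset_CYWhull hp) (margZ_mem_CYhull hp)
      fun _ => pos_margZ_of_pos_condX hp) hx.le
  · rfl

lemma margY_mul_klProjGain_le_sum (y : 𝓨) (hy : 0 < margY p y) :
    margY p y * klProjGain (condY p y) (margZ p) (CXhull p) ≤
      ∑ w, if 0 < margYW p y w then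
        margYW p y w * klProjGain (condYW p y w) (margZ p) (CXhull p) else 0 := by
  have hmix := klProjGain_le_sum_mul (fun w => div_nonneg (margYW_nonneg hp y w) hy.le)
    (fun w hw => condYW_mem_stdSimplex hp ((div_pos_iff_of_pos_right hy).1 hw))
    (condY_eq_sum_smul_condYW hp y) (CXhull_subset_stdSimplex hp) (margZ_mem_CXhull hp)
    fun _ => pos_margZ_of_pos_condY hp
  calc margY p y * klProjGain (condY p y) (margZ p) (CXhull p)
      ≤ margY p y * ∑ w, margYW p y w / margY p y *
          klProjGain (condYW p y w) (margZ p) (CXhull p) :=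
        mul_le_mul_of_nonneg_left hmix hy.le
    _ = ∑ w, margYW p y w * klProjGain (condYW p y w) (margZ p) (CXhull p) := by
        rw [mul_sum]
        refine sum_congr rfl fun w _ => ?_
        rw [← mul_assoc, mul_div_cancel₀ _ hy.ne']
    _ = _ := by
        refine sum_congr rfl fun w _ => ?_
        split_ifs with hyw
        · rfl
        · rw [(margYW_nonneg hp y w).antisymm' (not_lt.1 hyw), zero_mul]

lemma IprYX_le_IprYWX : IprYX p ≤ IprYWX p := by
  refine sum_le_sum fun y _ => ?_
  split_ifs with hy
  · exact margY_mul_klProjGain_le_sum hp y hy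
  · have hyw : ∀ w, ¬ 0 < margYW p y w := fun w h => hy (h.trans_le (margYW_le_margY hp y w))
    simp [hyw]

end ProjectedInformation

theorem Ired_monotone_general
    (p : 𝓧 × 𝓨 × 𝓦 × 𝓩 → ℝ) (hp : IsPMF p) :
    IredXY p ≤ IredXYW p :=
  min_le_min (IprXY_le_IprXYW hp) (IprYX_le_IprYWX hp)

/-- Monotonicity of redundant information: `I_red(Z;X,Y) ≤ I_red(Z;X,(Y,W))`,
where on the right `(Y,W)` is treated as a single variable. -/
theorem Ired_monotone
    [Nonempty 𝓧] [Nonempty 𝓨] [Nonempty 𝓦] [Nonempty 𝓩]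
    (p : 𝓧 × 𝓨 × 𝓦 × 𝓩 → ℝ) (hp : IsPMF p) :
    IredXY p ≤ IredXYW p :=
  Ired_monotone_general p hp
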